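/- Fix reals α, β with 0 ≤ α < 1 and β > 2. Let Q = {n ∈ ℕ : k₁((b_1,…,b_{n−1})) = 0 and k₁((b_1,…,b_n)) = 0} (the indices of b corresponding to flats of its path in the Hofbauer-type graph, with the convention k₁(empty word) = 0), and define c ∈ {0,…,ℓ}^ℕ by c_n = 1 if n ∈ Q and c_n = b_n otherwise. Then c ∈ Σ. -/

import Mathlib

/-!
For a word `w`, `F^|w|` maps the cylinder of `w` onto an interval `[lo w, hi w)` that is computed
letter by letter, so a sequence lies in `Σ` iff all the intervals of its prefixes are nonempty.
The left end of a nonempty such interval is a point `F^j(0)` with `(w_{n-j+1}, …, w_n) =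
(a_1, …, a_j)`; at a flat of `b` (`k₁ = 0`) it is therefore `0`. Replacing a letter `b_n ≥ 2` at a
flat by `1` then produces the whole interval `[0, 1)`, and since the letter-by-letter update is
monotone in the endpoints, the intervals along `c` contain those along `b`.
-/

noncomputable section

namespace IntermediateBeta

/-- The intermediate beta transformation `x ↦ βx + α mod 1`. -/
def F (α β : ℝ) (x : ℝ) : ℝ := Int.fract (β * x + α)

/-- The digit sequence of a point: `Om α β x n` is the index `i` with `F^[n] x ∈ J_i`.
For `y ∈ [0,1)` we have `y ∈ J_i ↔ ⌊β y + α⌋ = i`. -/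
def Om (α β : ℝ) (x : ℝ) : ℕ → ℕ := fun n => (⌊β * ((F α β)^[n] x) + α⌋).toNat

/-- `ℓ = ⌈α + β⌉ - 1`. -/
def ell (α β : ℝ) : ℕ := ⌈α + β⌉₊ - 1

/-- The subshift `Σ`: closure (in the product topology) of the set of digit sequences
of points of `[0,1)`. -/
def Sig (α β : ℝ) : Set (ℕ → ℕ) := closure (Om α β '' Set.Ico (0 : ℝ) 1)

/-- The shift map. -/
def shift (x : ℕ → ℕ) : ℕ → ℕ := fun n => x (n + 1)

/-- Lexicographic order on one-sided sequences. -/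
def lexLe (x y : ℕ → ℕ) : Prop := x = y ∨ ∃ k, (∀ i < k, x i = y i) ∧ x k < y k

/-- The language of a subset `S` of the full shift: the finite words occurring as
initial segments of elements of `S`. -/
def langOf (S : Set (ℕ → ℕ)) (w : List ℕ) : Prop :=
  ∃ x ∈ S, ∀ i : Fin w.length, x i = w.get i

/-- Membership in the language `𝓛` of the subshift `Σ`. -/
def inLang (α β : ℝ) (w : List ℕ) : Prop := langOf (Sig α β) w

/-- The tail segment of `w` of length `k` agrees with the initial segment of `s`
of length `k`. -/
def tailAgrees (s : ℕ → ℕ) (w : List ℕ) (k : ℕ) : Prop :=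
  k ≤ w.length ∧ ∀ i < k, w.getD (w.length - k + i) 0 = s i

/-- `kmax s w` is the length of the longest tail segment of `w` agreeing with an
initial segment of `s` (`k₁(w)` when `s = a`, `k₂(w)` when `s = b`). -/
def kmax (s : ℕ → ℕ) (w : List ℕ) : ℕ := sSup {k | tailAgrees s w k}

/-- `D a b` is the set of lengths `n` such that the initial segment of `b` of
length `n` occurs somewhere in `a`.  Thus `D a b` is the set `𝖣(a)` of the paper
and `D b a` is `𝖣(b)`. -/
def D (a b : ℕ → ℕ) : Set ℕ := {n | ∃ j, ∀ i < n, b i = a (j + i)}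

/-- Gluing of the words `w 0, v 0, w 1, v 1, …, v (n-1), w n`. -/
def glue {n : ℕ} (w : Fin (n + 1) → List ℕ) (v : Fin n → List ℕ) : List ℕ :=
  (List.ofFn fun i : Fin n => w i.castSucc ++ v i).flatten ++ w (Fin.last n)

/-- A collection `G` of words inside the language `lang` has specification: there
is `τ ∈ ℕ` such that any finite list of words of `G` can be glued, with gluing
words from `lang` of length `τ`, into a word of `lang`. -/
def HasSpec (lang G : List ℕ → Prop) : Prop :=
  ∃ τ : ℕ, 1 ≤ τ ∧ ∀ n : ℕ, ∀ w : Fin (n + 1) → List ℕ, (∀ i, G (w i)) →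
    ∃ v : Fin n → List ℕ, (∀ i, (v i).length = τ ∧ lang (v i)) ∧ lang (glue w v)

/-- The initial segment of a sequence, as a finite word. -/
def pre (s : ℕ → ℕ) (n : ℕ) : List ℕ := List.ofFn fun i : Fin n => s i

/-- Lexicographic order for finite words (of equal length). -/
def wordLe (u v : List ℕ) : Prop :=
  u = v ∨ ∃ k, (∀ i < k, u.getD i 0 = v.getD i 0) ∧ u.getD k 0 < v.getD k 0

/-- Concatenation of a finite word with an infinite sequence. -/
def wcat (w : List ℕ) (x : ℕ → ℕ) : ℕ → ℕ := fun n =>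
  if h : n < w.length then w.get ⟨n, h⟩ else x (n - w.length)

/-- The sequence `c` obtained from `b` by changing to `1` every letter of `b`
corresponding to a flat of the path of `b` in the Hofbauer-type graph (an index
`n` lies in `Q` iff `k₁(b_1…b_{n-1}) = 0` and `k₁(b_1…b_n) = 0`). -/
def cseq (a b : ℕ → ℕ) : ℕ → ℕ := fun n =>
  if kmax a (pre b n) = 0 ∧ kmax a (pre b (n + 1)) = 0 then 1 else b n

theorem mem_closure_iff_forall_exists_prefix {E : ℕ → Type*} [∀ n, TopologicalSpace (E n)]
    [∀ n, DiscreteTopology (E n)] {S : Set (∀ n, E n)} {y : ∀ n, E n} :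
    y ∈ closure S ↔ ∀ n, ∃ z ∈ S, ∀ i < n, z i = y i := by
  rw [(PiNat.isTopologicalBasis_cylinders E).mem_closure_iff]
  constructor
  · intro h n
    obtain ⟨z, hzy, hzS⟩ := h _ ⟨y, n, rfl⟩ (PiNat.self_mem_cylinder y n)
    exact ⟨z, hzS, PiNat.mem_cylinder_iff.1 hzy⟩
  · rintro h _ ⟨x, n, rfl⟩ hy
    obtain ⟨z, hzS, hzy⟩ := h n
    exact ⟨z, fun i hi => (hzy i hi).trans (hy i hi), hzS⟩

theorem pre_length (s : ℕ → ℕ) (n : ℕ) : (pre s n).length = n := List.length_ofFn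

theorem pre_eq_pre_iff {s t : ℕ → ℕ} {n : ℕ} : pre s n = pre t n ↔ ∀ i < n, s i = t i := by
  simp only [pre, List.ofFn_inj, funext_iff, Fin.forall_iff]

theorem pre_succ (s : ℕ → ℕ) (n : ℕ) : pre s (n + 1) = pre s n ++ [s n] := by
  rw [pre, List.ofFn_succ', List.concat_eq_append]
  rfl

theorem pre_succ_eq_cons (s : ℕ → ℕ) (n : ℕ) : pre s (n + 1) = s 0 :: pre (shift s) n := by
  simp [pre, List.ofFn_succ, shift]

theorem tailAgrees_zero (s : ℕ → ℕ) (w : List ℕ) : tailAgrees s w 0 :=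
  ⟨Nat.zero_le _, fun _ h => absurd h (Nat.not_lt_zero _)⟩

theorem tailAgrees.append_singleton {s : ℕ → ℕ} {w : List ℕ} {j : ℕ} (h : tailAgrees s w j) :
    tailAgrees s (w ++ [s j]) (j + 1) := by
  obtain ⟨hj, htail⟩ := h
  refine ⟨by simpa using hj, fun i hi => ?_⟩
  rw [List.length_append, List.length_singleton,
    show w.length + 1 - (j + 1) = w.length - j by omega]
  rcases Nat.lt_succ_iff_lt_or_eq.1 hi with hij | rfl
  · rw [List.getD_append _ _ _ _ (by omega)]
    exact htail i hij
  · rw [Nat.sub_add_cancel hj, List.getD_append_right _ _ _ _ le_rfl]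
    simp

theorem le_kmax {s : ℕ → ℕ} {w : List ℕ} {k : ℕ} (h : tailAgrees s w k) : k ≤ kmax s w :=
  le_csSup ⟨w.length, fun _ hk => hk.1⟩ h

section Dynamics

variable {α β : ℝ}

theorem shift_Om (x : ℝ) : shift (Om α β x) = Om α β (F α β x) := by
  funext n
  simp only [shift, Om, Function.iterate_succ_apply]

theorem Om_zero_eq_iff (hβ : 0 ≤ β) (hα : 0 ≤ α) {x : ℝ} (hx : 0 ≤ x) (d : ℕ) :
    Om α β x 0 = d ↔ ⌊β * x + α⌋ = d := by
  have : 0 ≤ ⌊β * x + α⌋ := Int.floor_nonneg.2 (by positivity)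
  simp only [Om, Function.iterate_zero_apply]
  omega

theorem Om_zero_zero (hα0 : 0 ≤ α) (hα1 : α < 1) : Om α β 0 0 = 0 := by
  simp [Om, Int.floor_eq_zero_iff.2 ⟨hα0, hα1⟩]

theorem F_eq_of_floor_eq {x : ℝ} {d : ℕ} (h : ⌊β * x + α⌋ = d) : F α β x = β * x + α - d := by
  rw [F, Int.fract, h, Int.cast_natCast]

/-- For `0 ≤ p`, `F` maps `J_d ∩ [p, q)` onto `[loStep α β p d, hiStep α β q d)`. -/
def loStep (α β : ℝ) (p : ℝ) (d : ℕ) : ℝ := max (β * p + α - d) 0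

def hiStep (α β : ℝ) (q : ℝ) (d : ℕ) : ℝ := min (β * q + α - d) 1

/-- `[lo w, hi w)` is the image under `F^|w|` of the set of points of `[0,1)` whose digit
sequence begins with `w`; see `exists_pre_Om_eq_iff`. -/
def lo (α β : ℝ) (w : List ℕ) : ℝ := w.foldl (loStep α β) 0

def hi (α β : ℝ) (w : List ℕ) : ℝ := w.foldl (hiStep α β) 1

theorem loStep_nonneg (p : ℝ) (d : ℕ) : 0 ≤ loStep α β p d := le_max_right _ _

theorem hiStep_le_one (q : ℝ) (d : ℕ) : hiStep α β q d ≤ 1 := min_le_right _ _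

theorem loStep_mono (hβ : 0 ≤ β) {p p' : ℝ} (h : p ≤ p') (d : ℕ) :
    loStep α β p d ≤ loStep α β p' d :=
  max_le_max (by gcongr) le_rfl

theorem hiStep_mono (hβ : 0 ≤ β) {q q' : ℝ} (h : q ≤ q') (d : ℕ) :
    hiStep α β q d ≤ hiStep α β q' d :=
  min_le_min (by gcongr) le_rfl

theorem lt_of_loStep_lt_hiStep (hβ : 0 ≤ β) {p q : ℝ} {d : ℕ}
    (h : loStep α β p d < hiStep α β q d) : p < q := by
  by_contra! hqp
  have : β * q ≤ β * p := by gcongr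
  have h₀ : hiStep α β q d ≤ β * q + α - d := min_le_left _ _
  have h₁ : β * p + α - d ≤ loStep α β p d := le_max_left _ _
  linarith

theorem natCast_lt_of_loStep_lt_hiStep {p q : ℝ} {d : ℕ} (h : loStep α β p d < hiStep α β q d) :
    (d : ℝ) < β * q + α := by
  have h₀ : 0 ≤ loStep α β p d := loStep_nonneg p d
  have h₁ : hiStep α β q d ≤ β * q + α - d := min_le_left _ _
  linarith

theorem loStep_eq_F {p : ℝ} {d : ℕ} (h : ⌊β * p + α⌋ = d) : loStep α β p d = F α β p := by
  rw [F_eq_of_floor_eq h, loStep, max_eq_left]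
  linarith [Int.floor_le (β * p + α), show ((⌊β * p + α⌋ : ℤ) : ℝ) = d by simp [h]]

theorem loStep_eq_zero_of_floor_lt {p : ℝ} {d : ℕ} (h : ⌊β * p + α⌋ < d) : loStep α β p d = 0 := by
  have : β * p + α < d := by exact_mod_cast Int.floor_lt.1 h
  exact max_eq_right (by linarith)

theorem one_le_loStep_of_lt_floor {p : ℝ} {d : ℕ} (h : (d : ℤ) < ⌊β * p + α⌋) :
    1 ≤ loStep α β p d := by
  have : ((d : ℤ) + 1 : ℝ) ≤ β * p + α := by exact_mod_cast Int.le_floor.1 (Int.add_one_le_iff.2 h)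
  exact (by push_cast at this; linarith : (1 : ℝ) ≤ β * p + α - d).trans (le_max_left _ _)

theorem loStep_one_eq_zero (hβ : 0 ≤ β) (hα : α < 1) {p : ℝ} (hp : p ≤ 0) : loStep α β p 1 = 0 := by
  have : β * p ≤ 0 := mul_nonpos_of_nonneg_of_nonpos hβ hp
  exact max_eq_right (by push_cast; linarith)

theorem hiStep_one_eq_one {q : ℝ} (h : 2 ≤ β * q + α) : hiStep α β q 1 = 1 :=
  min_eq_right (by push_cast; linarith)

theorem exists_digit_eq_and_F_eq_iff (hβ : 0 < β) (hα : 0 ≤ α) {p : ℝ} (hp : 0 ≤ p) (q : ℝ)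
    (d : ℕ) (y : ℝ) :
    (∃ x ∈ Set.Ico p q, Om α β x 0 = d ∧ F α β x = y) ↔
      y ∈ Set.Ico (loStep α β p d) (hiStep α β q d) := by
  constructor
  · rintro ⟨x, ⟨hpx, hxq⟩, hd, rfl⟩
    have hfl := (Om_zero_eq_iff hβ.le hα (hp.trans hpx) d).1 hd
    have hFx := F_eq_of_floor_eq hfl
    have h0 : 0 ≤ F α β x := Int.fract_nonneg _
    have h1 : F α β x < 1 := Int.fract_lt_one _
    have : β * p ≤ β * x := by gcongr
    have : β * x < β * q := by gcongr
    exact ⟨max_le (by linarith) h0, lt_min (by linarith) h1⟩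
  · rintro ⟨hy₀, hy₁⟩
    have hy0 : 0 ≤ y := (loStep_nonneg p d).trans hy₀
    have hy1 : y < 1 := hy₁.trans_le (hiStep_le_one q d)
    have hpy : β * p + α - d ≤ y := (le_max_left _ _).trans hy₀
    have hyq : y < β * q + α - d := hy₁.trans_le (min_le_left _ _)
    have hx : β * ((y + d - α) / β) + α = y + d := by field_simp; ring
    have hfl : ⌊β * ((y + d - α) / β) + α⌋ = d := by
      rw [hx, Int.floor_eq_iff]
      push_cast
      constructor <;> linarith
    refine ⟨(y + d - α) / β, ⟨?_, ?_⟩, ?_, ?_⟩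
    · rw [le_div_iff₀ hβ]; linarith
    · rw [div_lt_iff₀ hβ]; linarith
    · refine (Om_zero_eq_iff hβ.le hα ?_ d).2 hfl
      exact div_nonneg (by nlinarith) hβ.le
    · rw [F_eq_of_floor_eq hfl, hx]; ring

theorem exists_pre_Om_eq_iff (hβ : 0 < β) (hα : 0 ≤ α) (w : List ℕ) {p : ℝ} (hp : 0 ≤ p)
    (q y : ℝ) :
    (∃ x ∈ Set.Ico p q, pre (Om α β x) w.length = w ∧ (F α β)^[w.length] x = y) ↔
      y ∈ Set.Ico (w.foldl (loStep α β) p) (w.foldl (hiStep α β) q) := by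
  induction w generalizing p q with
  | nil => simp [pre]
  | cons d t ih =>
    rw [List.foldl_cons, List.foldl_cons, ← ih (loStep_nonneg p d)]
    simp only [List.length_cons, pre_succ_eq_cons, shift_Om, List.cons.injEq,
      Function.iterate_succ_apply]
    constructor
    · rintro ⟨x, hx, ⟨hd, ht⟩, hy⟩
      exact ⟨F α β x, (exists_digit_eq_and_F_eq_iff hβ hα hp q d _).1 ⟨x, hx, hd, rfl⟩, ht, hy⟩
    · rintro ⟨x₁, hx₁, ht, hy⟩
      obtain ⟨x, hx, hd, rfl⟩ := (exists_digit_eq_and_F_eq_iff hβ hα hp q d x₁).2 hx₁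
      exact ⟨x, hx, ⟨hd, ht⟩, hy⟩

theorem exists_pre_Om_eq_iff_lo_lt_hi (hβ : 0 < β) (hα : 0 ≤ α) (w : List ℕ) :
    (∃ x ∈ Set.Ico (0 : ℝ) 1, pre (Om α β x) w.length = w) ↔ lo α β w < hi α β w := by
  rw [← Set.nonempty_Ico]
  constructor
  · rintro ⟨x, hx, hw⟩
    exact ⟨_, (exists_pre_Om_eq_iff hβ hα w le_rfl 1 _).1 ⟨x, hx, hw, rfl⟩⟩
  · rintro ⟨y, hy⟩
    obtain ⟨x, hx, hw, -⟩ := (exists_pre_Om_eq_iff hβ hα w le_rfl 1 y).2 hy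
    exact ⟨x, hx, hw⟩

theorem mem_Sig_iff (hβ : 0 < β) (hα : 0 ≤ α) {y : ℕ → ℕ} :
    y ∈ Sig α β ↔ ∀ n, lo α β (pre y n) < hi α β (pre y n) := by
  simp only [Sig, mem_closure_iff_forall_exists_prefix, Set.exists_mem_image, ← pre_eq_pre_iff,
    ← exists_pre_Om_eq_iff_lo_lt_hi hβ hα, pre_length]

theorem lo_append_singleton (w : List ℕ) (d : ℕ) : lo α β (w ++ [d]) = loStep α β (lo α β w) d := by
  simp [lo]

theorem hi_append_singleton (w : List ℕ) (d : ℕ) : hi α β (w ++ [d]) = hiStep α β (hi α β w) d := by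
  simp [hi]

/-- Appending a digit `d` either moves the left end `F^[j] 0` along the orbit of `0` (when `d` is
the digit of `F^[j] 0`), resets it to `0` (when `d` is larger), or empties the interval. -/
theorem exists_tailAgrees_lo_eq (hβ : 0 ≤ β) {w : List ℕ} (hw : lo α β w < hi α β w) :
    ∃ j, tailAgrees (Om α β 0) w j ∧ lo α β w = (F α β)^[j] 0 := by
  induction w using List.reverseRecOn with
  | nil => exact ⟨0, tailAgrees_zero _ _, rfl⟩
  | append_singleton u d ih =>
    rw [lo_append_singleton, hi_append_singleton] at hw
    rw [lo_append_singleton]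
    obtain ⟨j, hj, hlo⟩ := ih (lt_of_loStep_lt_hiStep hβ hw)
    rcases lt_trichotomy ⌊β * lo α β u + α⌋ d with hlt | heq | hgt
    · exact ⟨0, tailAgrees_zero _ _, loStep_eq_zero_of_floor_lt hlt⟩
    · have hd : Om α β 0 j = d := by simp [Om, ← hlo, heq]
      refine ⟨j + 1, hd ▸ hj.append_singleton, ?_⟩
      rw [loStep_eq_F heq, hlo, Function.iterate_succ_apply']
    · exact absurd ((one_le_loStep_of_lt_floor hgt).trans_lt (hw.trans_le (hiStep_le_one _ _)))
        (lt_irrefl 1)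

theorem lo_eq_zero_of_kmax_eq_zero (hβ : 0 ≤ β) {w : List ℕ} (hk : kmax (Om α β 0) w = 0)
    (hw : lo α β w < hi α β w) : lo α β w = 0 := by
  obtain ⟨j, hj, hlo⟩ := exists_tailAgrees_lo_eq hβ hw
  obtain rfl : j = 0 := Nat.le_zero.1 (hk ▸ le_kmax hj)
  exact hlo

/-- At a flat with `b n ≥ 2` the interval of `b` starts at `0` and, its successor being nonempty,
satisfies `β * hi + α > 2`, so the digit `1` maps it onto all of `[0, 1)`. -/
theorem lo_pre_cseq_le_and_hi_pre_le (hβ : 0 < β) (hα0 : 0 ≤ α) (hα1 : α < 1) {b : ℕ → ℕ}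
    (hb : ∀ n, lo α β (pre b n) < hi α β (pre b n)) :
    ∀ n, lo α β (pre (cseq (Om α β 0) b) n) ≤ lo α β (pre b n) ∧
      hi α β (pre b n) ≤ hi α β (pre (cseq (Om α β 0) b) n)
  | 0 => ⟨le_rfl, le_rfl⟩
  | n + 1 => by
    obtain ⟨ihlo, ihhi⟩ := lo_pre_cseq_le_and_hi_pre_le hβ hα0 hα1 hb n
    simp only [pre_succ, lo_append_singleton, hi_append_singleton]
    have hmono : ∀ d, loStep α β (lo α β (pre (cseq (Om α β 0) b) n)) d ≤
        loStep α β (lo α β (pre b n)) d ∧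
        hiStep α β (hi α β (pre b n)) d ≤ hiStep α β (hi α β (pre (cseq (Om α β 0) b) n)) d :=
      fun d => ⟨loStep_mono hβ.le ihlo d, hiStep_mono hβ.le ihhi d⟩
    by_cases hflat : kmax (Om α β 0) (pre b n) = 0 ∧ kmax (Om α β 0) (pre b (n + 1)) = 0
    swap
    · simpa only [cseq, if_neg hflat] using hmono (b n)
    simp only [cseq, if_pos hflat]
    have hbn : b n ≠ 0 := by
      intro h0
      have := le_kmax ((tailAgrees_zero (Om α β 0) (pre b n)).append_singleton)
      rw [Om_zero_zero hα0 hα1, ← h0, ← pre_succ, hflat.2] at this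
      omega
    obtain h1 | h2 : b n = 1 ∨ 2 ≤ b n := by omega
    · simpa only [h1] using hmono 1
    have hlo0 := lo_eq_zero_of_kmax_eq_zero hβ.le hflat.1 (hb n)
    have hd := natCast_lt_of_loStep_lt_hiStep
      (by simpa only [pre_succ, lo_append_singleton, hi_append_singleton] using hb (n + 1))
    have : (2 : ℝ) ≤ b n := by exact_mod_cast h2
    have : β * hi α β (pre b n) ≤ β * hi α β (pre (cseq (Om α β 0) b) n) := by gcongr
    rw [loStep_one_eq_zero hβ.le hα1 (hlo0 ▸ ihlo), hiStep_one_eq_one (by linarith)]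
    exact ⟨loStep_nonneg _ _, hiStep_le_one _ _⟩

end Dynamics

theorem cseq_mem_Sig_general (α β : ℝ) (hα0 : 0 ≤ α) (hα1 : α < 1) (hβ : 2 < β)
    (b : ℕ → ℕ) (hb : b ∈ Sig α β) :
    cseq (Om α β 0) b ∈ Sig α β := by
  have hβ0 : 0 < β := by linarith
  rw [mem_Sig_iff hβ0 hα0] at hb ⊢
  intro n
  obtain ⟨hlo, hhi⟩ := lo_pre_cseq_le_and_hi_pre_le hβ0 hα0 hα1 hb n
  exact (hlo.trans_lt (hb n)).trans_le hhi

/-- **Lemma.** For `0 ≤ α < 1` and `β > 2`, the sequence `c` belongs to `Σ`. -/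
theorem cseq_mem_Sig (α β : ℝ) (hα0 : 0 ≤ α) (hα1 : α < 1) (hβ : 2 < β)
    (b : ℕ → ℕ) (hb : b ∈ Sig α β) (hbsup : ∀ y ∈ Sig α β, lexLe y b) :
    cseq (Om α β 0) b ∈ Sig α β :=
  cseq_mem_Sig_general α β hα0 hα1 hβ b hb

end IntermediateBeta
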